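/- arXiv:2204.10998 — 3 statements merged into one kernel-verified Lean document; each statement's English description precedes it below -/
import Mathlib

section
/- Let A and B be finite multisets of positive integers. If ∏_{w ∈ A} g_w = ∏_{w ∈ B} g_w in ℚ⟦X⟧, then A = B as multisets. -/
/-!
Every `g w` with `w > 0` is `1` plus terms of degree `≥ w`. So if all weights in `S` are
`≥ m > 0`, the coefficient of `X^m` in `∏_{w ∈ S} g w` is `2 · (multiplicity of m in S)`.
Induct on `m`: once the multiplicities of all weights `< m` agree, cancel the (nonzero) product
over those weights and read off the multiplicity of `m` from the coefficient of `X^m`.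
-/

/-- `g w = 1 + 2 ∑_{j ≥ 1} X^{jw}` in `ℚ⟦X⟧`. -/
noncomputable def g (w : ℕ) : PowerSeries ℚ :=
  PowerSeries.mk fun n => if n = 0 then 1 else if w ∣ n then 2 else 0

open PowerSeries

lemma coeff_mul_eq_of_coeff_eq_zero {R : Type*} [CommSemiring R] {f p : R⟦X⟧} {m : ℕ}
    (hm : 0 < m) (hf : ∀ k, 0 < k → k < m → coeff k f = 0) :
    coeff m (f * p) = constantCoeff f * coeff m p + coeff m f * constantCoeff p := by
  obtain ⟨n, rfl⟩ := Nat.exists_eq_add_one.mpr hm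
  have hmiddle : ∑ i ∈ Finset.range n, coeff (i + 1) f * coeff (n + 1 - (i + 1)) p = 0 :=
    Finset.sum_eq_zero fun i hi => by
      rw [hf (i + 1) i.succ_pos (by simpa using hi), zero_mul]
  rw [coeff_mul, Finset.Nat.sum_antidiagonal_eq_sum_range_succ (fun i j => coeff i f * coeff j p),
    Finset.sum_range_succ, Finset.sum_range_succ', hmiddle]
  simp

lemma coeff_g (n w : ℕ) : coeff n (g w) = if n = 0 then 1 else if w ∣ n then 2 else 0 :=
  coeff_mk _ _

lemma constantCoeff_g (w : ℕ) : constantCoeff (g w) = 1 := by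
  rw [← coeff_zero_eq_constantCoeff_apply, coeff_g, if_pos rfl]

lemma constantCoeff_prod_g (S : Multiset ℕ) : constantCoeff (S.map g).prod = 1 := by
  simp [map_multiset_prod, Multiset.map_map, constantCoeff_g]

lemma prod_g_ne_zero (S : Multiset ℕ) : (S.map g).prod ≠ 0 := fun h0 => by
  simpa [h0] using constantCoeff_prod_g S

lemma coeff_g_mul {m w : ℕ} (hm : 0 < m) (hmw : m ≤ w) (p : ℚ⟦X⟧) :
    coeff m (g w * p) = coeff m p + (if m = w then 2 else 0) * constantCoeff p := by
  have hlow : ∀ k, 0 < k → k < m → coeff k (g w) = 0 := fun k hk hkm => by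
    rw [coeff_g, if_neg hk.ne', if_neg fun hd => (Nat.le_of_dvd hk hd).not_gt (by omega)]
  have htop : coeff m (g w) = if m = w then 2 else 0 := by
    rw [coeff_g, if_neg hm.ne']
    by_cases hmw' : m = w
    · simp [hmw']
    · rw [if_neg fun hd => hmw' (le_antisymm hmw (Nat.le_of_dvd hm hd)), if_neg hmw']
  rw [coeff_mul_eq_of_coeff_eq_zero hm hlow, constantCoeff_g, one_mul, htop]

lemma coeff_prod_g {m : ℕ} (hm : 0 < m) {S : Multiset ℕ} (hS : ∀ w ∈ S, m ≤ w) :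
    coeff m (S.map g).prod = 2 * S.count m := by
  induction S using Multiset.induction with
  | empty => simp [coeff_one, hm.ne']
  | cons w S ih =>
    rw [Multiset.forall_mem_cons] at hS
    rw [Multiset.map_cons, Multiset.prod_cons, coeff_g_mul hm hS.1, ih hS.2,
      constantCoeff_prod_g, Multiset.count_cons]
    split_ifs <;> push_cast <;> ring

lemma count_eq_of_prod_g_eq {m : ℕ} (hm : 0 < m) {A B : Multiset ℕ} (hA : ∀ w ∈ A, m ≤ w)
    (hB : ∀ w ∈ B, m ≤ w) (h : (A.map g).prod = (B.map g).prod) : A.count m = B.count m := by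
  have := congrArg (coeff m) h
  rw [coeff_prod_g hm hA, coeff_prod_g hm hB] at this
  exact_mod_cast mul_left_cancel₀ two_ne_zero this

theorem stmt_3 (A B : Multiset ℕ) (hA : ∀ x ∈ A, 0 < x) (hB : ∀ x ∈ B, 0 < x)
    (h : (A.map g).prod = (B.map g).prod) : A = B := by
  ext m
  induction m using Nat.strong_induction_on with
  | _ m ih =>
    rcases m.eq_zero_or_pos with rfl | hm
    · rw [Multiset.count_eq_zero.mpr fun h0 => (hA 0 h0).false,
        Multiset.count_eq_zero.mpr fun h0 => (hB 0 h0).false]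
    have hbelow : A.filter (· < m) = B.filter (· < m) := Multiset.ext.mpr fun k => by
      rw [Multiset.count_filter, Multiset.count_filter]
      split_ifs with hk
      exacts [ih k hk, rfl]
    have habove : ((A.filter (¬ · < m)).map g).prod = ((B.filter (¬ · < m)).map g).prod := by
      rw [← Multiset.filter_add_not (· < m) A, ← Multiset.filter_add_not (· < m) B, hbelow,
        Multiset.map_add, Multiset.map_add, Multiset.prod_add, Multiset.prod_add] at h
      exact mul_left_cancel₀ (prod_g_ne_zero _) h
    have hcount := count_eq_of_prod_g_eq hm
      (fun w hw => not_lt.mp (Multiset.mem_filter.mp hw).2)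
      (fun w hw => not_lt.mp (Multiset.mem_filter.mp hw).2) habove
    rwa [Multiset.count_filter_of_pos (p := fun w => ¬ w < m) (lt_irrefl m),
      Multiset.count_filter_of_pos (p := fun w => ¬ w < m) (lt_irrefl m)] at hcount
end

section
/- Let a, b, c, d, e, f be positive integers. If g_a·g_b·g_c + g_d·g_e·g_f = g_a·g_b·g_d + g_c·g_e·g_f in ℚ⟦X⟧, then c = d or {a, b} = {e, f} as multisets. -/
/-!
Since `ℚ⟦X⟧` is an integral domain, the hypothesis factors as
`(g c - g d) * (g a * g b - g e * g f) = 0`. The map `w ↦ g w` is injective on positive integers,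
as `g w` has coefficient `2` at `X^w`. For `g a * g b = g e * g f`, let `a` be the least of the four
indices: the coefficient of `X^a` is nonzero on the left, so `a ∈ {e, f}`, and cancelling `g a`
reduces to injectivity again.
-/

open PowerSeries

lemma coeff_g_zero (w : ℕ) : coeff 0 (g w) = 1 := by
  simp [g]

lemma coeff_g_of_pos {n : ℕ} (w : ℕ) (hn : 0 < n) :
    coeff n (g w) = if w ∣ n then 2 else 0 := by
  simp [g, hn.ne']

lemma coeff_g_of_lt {n w : ℕ} (hn : 0 < n) (hnw : n < w) : coeff n (g w) = 0 := by
  rw [coeff_g_of_pos w hn, if_neg (Nat.not_dvd_of_pos_of_lt hn hnw)]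

lemma g_ne_zero (w : ℕ) : g w ≠ 0 :=
  fun h => by simpa [h] using coeff_g_zero w

lemma g_injOn : Set.InjOn g (Set.Ioi 0) := by
  have dvd_of_eq : ∀ {c d : ℕ}, 0 < c → g c = g d → d ∣ c := fun {c d} hc h => by
    by_contra hdc
    simpa [coeff_g_of_pos _ hc, hdc] using congr(coeff c $h)
  intro c hc d hd h
  exact Nat.dvd_antisymm (dvd_of_eq hd h.symm) (dvd_of_eq hc h)

/-- For `m ≤ min a b`, only the terms `coeff m (g a) · 1` and `1 · coeff m (g b)` of the Cauchy
product survive. -/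
lemma coeff_g_mul_g {a b m : ℕ} (hm : 0 < m) (hma : m ≤ a) (hmb : m ≤ b) :
    coeff m (g a * g b) = (if a = m then 2 else 0) + (if b = m then 2 else 0) := by
  have coeff_g_of_le {w : ℕ} (hmw : m ≤ w) : coeff m (g w) = if w = m then 2 else 0 := by
    rcases hmw.eq_or_lt with rfl | hlt
    · simp [coeff_g_of_pos m hm]
    · simp [coeff_g_of_lt hm hlt, hlt.ne']
  rw [coeff_mul, Finset.sum_eq_add (m, 0) (0, m) (by simp [hm.ne'])]
  · simp [coeff_g_zero, coeff_g_of_le hma, coeff_g_of_le hmb]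
  · rintro ⟨i, j⟩ hij ⟨him, hi0⟩
    rw [Finset.HasAntidiagonal.mem_antidiagonal] at hij
    have hi : 0 < i := by grind
    rw [coeff_g_of_lt hi (by grind), zero_mul]
  all_goals simp

lemma pair_eq_of_g_mul_g_eq {a b e f : ℕ} (ha : 0 < a) (hb : 0 < b) (he : 0 < e) (hf : 0 < f)
    (h : g a * g b = g e * g f) : ({a, b} : Multiset ℕ) = {e, f} := by
  wlog hab : a ≤ b generalizing a b
  · rw [Multiset.pair_comm]
    exact this hb ha (by rwa [mul_comm]) (by omega)
  wlog hef : e ≤ f generalizing e f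
  · rw [Multiset.pair_comm e]
    exact this hf he (by rwa [mul_comm (g f)]) (by omega)
  wlog hae : a ≤ e generalizing a b e f
  · exact (this he hf hef ha hb h.symm hab (by omega)).symm
  obtain rfl : e = a := by
    by_contra hea
    have := congr(coeff a $h)
    rw [coeff_g_mul_g ha le_rfl hab, coeff_g_mul_g ha hae (hae.trans hef)] at this
    grind
  rw [g_injOn hb hf (mul_left_cancel₀ (g_ne_zero e) h)]

theorem stmt_5 (a b c d e f : ℕ) (ha : 0 < a) (hb : 0 < b) (hc : 0 < c)
    (hd : 0 < d) (he : 0 < e) (hf : 0 < f)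
    (h : g a * g b * g c + g d * g e * g f = g a * g b * g d + g c * g e * g f) :
    c = d ∨ ({a, b} : Multiset ℕ) = {e, f} := by
  have factored : (g c - g d) * (g a * g b - g e * g f) = 0 := by linear_combination h
  rcases mul_eq_zero.mp factored with hcd | habef
  · exact .inl (g_injOn hc hd (sub_eq_zero.mp hcd))
  · exact .inr (pair_eq_of_g_mul_g_eq ha hb he hf (sub_eq_zero.mp habef))
end

section
/- Let b, c, d, f be positive integers. If g_{b+d}·g_c·(g_b + g_d) = g_f·(g_b·g_d + g_c·g_c) in ℚ⟦X⟧, then f = b + d and moreover c = b or c = d. -/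
open PowerSeries

theorem g_mul_one_sub_X_pow {w : ℕ} (hw : 0 < w) : g w * (1 - X ^ w) = 1 + X ^ w := by
  ext n
  simp only [g, mul_sub, mul_one, map_sub, map_add, coeff_mul_X_pow', coeff_mk, coeff_one,
    coeff_X_pow]
  rcases lt_trichotomy n w with hn | rfl | hn
  · have : ¬ w ∣ n ∨ n = 0 := by
      rcases Nat.eq_zero_or_pos n with h0 | hpos
      · exact .inr h0
      · exact .inl fun hd => (Nat.le_of_dvd hpos hd).not_gt hn
    split_ifs <;> simp_all; omega
  · simp [hw.ne']
    norm_num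
  · have : w ∣ n - w ↔ w ∣ n := by simp [Nat.dvd_sub_self_right, hn.not_ge]
    split_ifs <;> simp_all <;> omega

theorem PowerSeries.one_sub_X_pow_ne_zero {R : Type*} [Ring R] [Nontrivial R] {n : ℕ}
    (hn : n ≠ 0) : (1 - X ^ n : R⟦X⟧) ≠ 0 := fun h0 => by
  simpa [zero_pow hn] using congrArg constantCoeff h0

theorem PowerSeries.coeff_multiset_sum_X_pow {R : Type*} [Semiring R] (s : Multiset ℕ) (n : ℕ) :
    coeff n (s.map (X ^ ·) : Multiset R⟦X⟧).sum = s.count n := by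
  induction s using Multiset.induction_on with
  | empty => simp
  | cons a s ih => simp [ih, coeff_X_pow, Multiset.count_cons, add_comm]

theorem PowerSeries.multiset_sum_X_pow_injective {R : Type*} [Semiring R] [CharZero R] :
    Function.Injective fun s : Multiset ℕ => (s.map (X ^ ·) : Multiset R⟦X⟧).sum := by
  intro s t hst
  ext n
  exact_mod_cast (coeff_multiset_sum_X_pow (R := R) s n).symm.trans
    ((congrArg (coeff n) hst).trans (coeff_multiset_sum_X_pow t n))

theorem relation_of_cayley_eq {R : Type*} [CommRing R] [IsDomain R] [CharZero R]
    {x y z u gx gy gz gu gxy : R}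
    (hx : gx * (1 - x) = 1 + x) (hy : gy * (1 - y) = 1 + y) (hz : gz * (1 - z) = 1 + z)
    (hu : gu * (1 - u) = 1 + u) (hxy : gxy * (1 - x * y) = 1 + x * y) (hxy0 : 1 - x * y ≠ 0)
    (h : gxy * gz * (gx + gy) = gu * (gx * gy + gz * gz)) :
    (1 + x * y) * (u + z ^ 2) = (1 + u) * (x + y) * z := by
  set P := (1 - x * y) * (1 - x) * (1 - y) * (1 - z) ^ 2 * (1 - u)
  have hL : gxy * gz * (gx + gy) * P
      = (1 + x * y) * (1 + z) * ((1 + x) * (1 - y) + (1 + y) * (1 - x)) * ((1 - z) * (1 - u)) :=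
    calc _ = (gxy * (1 - x * y)) * (gz * (1 - z))
          * (gx * (1 - x) * (1 - y) + gy * (1 - y) * (1 - x)) * ((1 - z) * (1 - u)) := by ring
      _ = _ := by rw [hxy, hz, hx, hy]
  have hR : gu * (gx * gy + gz * gz) * P
      = (1 + u) * ((1 + x) * (1 + y) * (1 - z) ^ 2 + (1 + z) ^ 2 * (1 - x) * (1 - y))
        * (1 - x * y) :=
    calc _ = (gu * (1 - u)) * ((gx * (1 - x)) * (gy * (1 - y)) * (1 - z) ^ 2
          + (gz * (1 - z)) ^ 2 * (1 - x) * (1 - y)) * (1 - x * y) := by ring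
      _ = _ := by rw [hu, hx, hy, hz]
  have : (4 * (1 - x * y)) * ((1 + x * y) * (u + z ^ 2) - (1 + u) * (x + y) * z) = 0 := by
    linear_combination hL - hR - P * h
  have h4 : (4 : R) ≠ 0 := by norm_num
  simpa [sub_eq_zero, h4, hxy0] using this

theorem eq_add_and_eq_or_eq_of_multiset_eq {b c d f : ℕ} (hb : 0 < b) (hd : 0 < d)
    (h : ({f, 2 * c, b + d + f, b + d + 2 * c} : Multiset ℕ)
      = {b + c, d + c, f + b + c, f + d + c}) :
    f = b + d ∧ (c = b ∨ c = d) := by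
  have h2c : 2 * c ∈ ({b + c, d + c, f + b + c, f + d + c} : Multiset ℕ) := by rw [← h]; simp
  have h2cbd : b + d + 2 * c ∈ ({b + c, d + c, f + b + c, f + d + c} : Multiset ℕ) := by
    rw [← h]; simp
  have hbc : b + c ∈ ({f, 2 * c, b + d + f, b + d + 2 * c} : Multiset ℕ) := by rw [h]; simp
  have hdc : d + c ∈ ({f, 2 * c, b + d + f, b + d + 2 * c} : Multiset ℕ) := by rw [h]; simp
  simp only [Multiset.insert_eq_cons, Multiset.mem_cons, Multiset.mem_singleton]
    at h2c h2cbd hbc hdc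
  omega

theorem stmt_12 (b c d f : ℕ) (hb : 0 < b) (hc : 0 < c) (hd : 0 < d) (hf : 0 < f)
    (h : g (b + d) * g c * (g b + g d) = g f * (g b * g d + g c * g c)) :
    f = b + d ∧ (c = b ∨ c = d) := by
  have : CharZero ℚ⟦X⟧ := charZero_of_injective_algebraMap (algebraMap ℚ ℚ⟦X⟧).injective
  have hbd : g (b + d) * (1 - X ^ b * X ^ d) = 1 + X ^ b * X ^ d := by
    rw [← pow_add]
    exact g_mul_one_sub_X_pow (by omega)
  have hbd0 : (1 - X ^ b * X ^ d : ℚ⟦X⟧) ≠ 0 := by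
    rw [← pow_add]
    exact one_sub_X_pow_ne_zero (by omega)
  have key := relation_of_cayley_eq (g_mul_one_sub_X_pow hb) (g_mul_one_sub_X_pow hd)
    (g_mul_one_sub_X_pow hc) (g_mul_one_sub_X_pow hf) hbd hbd0 h
  refine eq_add_and_eq_or_eq_of_multiset_eq hb hd (multiset_sum_X_pow_injective (R := ℚ) ?_)
  simp only [Multiset.insert_eq_cons, Multiset.map_cons, Multiset.map_singleton,
    Multiset.sum_cons, Multiset.sum_singleton, pow_add, pow_mul]
  linear_combination key
end
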